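/- Let H be a Hilbert space and A a unital *-subalgebra of B(H). Then the closure of A in the strong operator topology equals the double commutant A'' (von Neumann's double commutant theorem). -/

import Mathlib

set_option maxHeartbeats 1000000
set_option synthInstance.maxHeartbeats 400000
set_option linter.unusedSectionVars false

open ContinuousLinearMap

namespace Stmt17Aux

variable {H : Type*} [NormedAddCommGroup H] [InnerProductSpace ℂ H] [CompleteSpace H] {n : ℕ}

local notation "⟪" x ", " y "⟫" => @inner ℂ _ _ x y

/-- diagonal (amplified) operator on `H^n` -/
noncomputable def dg (n : ℕ) (a : H →L[ℂ] H) :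
    PiLp 2 (fun _ : Fin n => H) →L[ℂ] PiLp 2 (fun _ : Fin n => H) :=
  (PiLp.continuousLinearEquiv 2 ℂ _).symm.toContinuousLinearMap ∘L
    (ContinuousLinearMap.pi fun i => a ∘L ContinuousLinearMap.proj i) ∘L
    (PiLp.continuousLinearEquiv 2 ℂ _).toContinuousLinearMap

@[simp] lemma dg_apply (a : H →L[ℂ] H) (x : PiLp 2 (fun _ : Fin n => H)) (i : Fin n) :
    dg n a x i = a (x i) := rfl

/-- inclusion in the `j`-th coordinate -/
noncomputable def inc (n : ℕ) (j : Fin n) : H →L[ℂ] PiLp 2 (fun _ : Fin n => H) :=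
  (PiLp.continuousLinearEquiv 2 ℂ _).symm.toContinuousLinearMap ∘L
    (ContinuousLinearMap.pi fun i => if i = j then ContinuousLinearMap.id ℂ H else 0)

lemma inc_apply (j i : Fin n) (x : H) : inc n j x i = if i = j then x else 0 := by
  by_cases h : i = j <;> simp [inc, ContinuousLinearMap.pi, h]

/-- projection onto the `i`-th coordinate -/
noncomputable def prj (n : ℕ) (i : Fin n) : PiLp 2 (fun _ : Fin n => H) →L[ℂ] H :=
  (ContinuousLinearMap.proj i) ∘L (PiLp.continuousLinearEquiv 2 ℂ _).toContinuousLinearMap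

@[simp] lemma prj_apply (i : Fin n) (x : PiLp 2 (fun _ : Fin n => H)) : prj n i x = x i := rfl

lemma piLp_sum_apply {ι : Type*} (s : Finset ι) (v : ι → PiLp 2 (fun _ : Fin n => H)) (i : Fin n) :
    (∑ j ∈ s, v j) i = ∑ j ∈ s, v j i := by
  induction s using Finset.cons_induction with
  | empty => rfl
  | cons j s hj ih => simp only [Finset.sum_cons, ← ih]; rfl

lemma sum_inc (x : PiLp 2 (fun _ : Fin n => H)) : (∑ j, inc n j (x j)) = x := by
  ext i
  rw [piLp_sum_apply]
  simp [inc_apply]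

lemma dg_adjoint_inner (a : H →L[ℂ] H) (x y : PiLp 2 (fun _ : Fin n => H)) :
    ⟪dg n a x, y⟫ = ⟪x, dg n (ContinuousLinearMap.adjoint a) y⟫ := by
  simp only [PiLp.inner_apply, dg_apply, ContinuousLinearMap.adjoint_inner_right]

lemma piLp_norm_apply_le (x : PiLp 2 (fun _ : Fin n => H)) (i : Fin n) : ‖x i‖ ≤ ‖x‖ := by
  rw [PiLp.norm_eq_of_L2]
  have h1 : ‖x i‖ = Real.sqrt (‖x i‖ ^ 2) := (Real.sqrt_sq (norm_nonneg _)).symm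
  rw [h1]
  apply Real.sqrt_le_sqrt
  exact Finset.single_le_sum (f := fun j => ‖x j‖ ^ 2) (fun j _ => sq_nonneg _) (Finset.mem_univ i)

/-- An operator leaving `K` invariant together with its adjoint commutes with the
orthogonal projection onto `K`. -/
lemma proj_comm {F : Type*} [NormedAddCommGroup F] [InnerProductSpace ℂ F]
    (K : Submodule ℂ F) [K.HasOrthogonalProjection] (S Sstar : F →L[ℂ] F)
    (hadj : ∀ x y, ⟪S x, y⟫ = ⟪x, Sstar y⟫)
    (h1 : ∀ x ∈ K, S x ∈ K) (h2 : ∀ x ∈ K, Sstar x ∈ K) (x : F) :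
    (K.subtypeL (K.orthogonalProjectionOnto (S x))) = S (K.subtypeL (K.orthogonalProjectionOnto x)) := by
  have hmem : S (K.subtypeL (K.orthogonalProjectionOnto x)) ∈ K := h1 _ (K.orthogonalProjectionOnto x).2
  have hperp : S (x - K.subtypeL (K.orthogonalProjectionOnto x)) ∈ Kᗮ := by
    rw [Submodule.mem_orthogonal]
    intro k hk
    have h3 : ⟪Sstar k, x - K.subtypeL (K.orthogonalProjectionOnto x)⟫ = 0 :=
      (Submodule.mem_orthogonal K _).1 (Submodule.sub_starProjection_mem_orthogonal x) _ (h2 k hk)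
    have h4 : ⟪S (x - K.subtypeL (K.orthogonalProjectionOnto x)), k⟫ = 0 := by
      rw [hadj, ← inner_conj_symm, h3]; simp
    rw [← inner_conj_symm, h4]; simp
  have hx : S x = S (K.subtypeL (K.orthogonalProjectionOnto x))
      + S (x - K.subtypeL (K.orthogonalProjectionOnto x)) := by
    rw [← map_add]; congr 1; abel
  rw [hx, map_add, map_add]
  have e1 : K.subtypeL (K.orthogonalProjectionOnto (S (K.subtypeL (K.orthogonalProjectionOnto x))))
      = S (K.subtypeL (K.orthogonalProjectionOnto x)) := by
    have := Submodule.orthogonalProjection_mem_subspace_eq_self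
      (K := K) ⟨S (K.subtypeL (K.orthogonalProjectionOnto x)), hmem⟩
    exact congrArg (K.subtypeL) this
  have e2 : K.orthogonalProjectionOnto (S (x - K.subtypeL (K.orthogonalProjectionOnto x))) = 0 :=
    Submodule.orthogonalProjectionOnto_apply_of_mem_orthogonal hperp
  rw [e1, e2]
  simp

lemma proj_self {F : Type*} [NormedAddCommGroup F] [InnerProductSpace ℂ F]
    (K : Submodule ℂ F) [K.HasOrthogonalProjection] {x : F} (hx : x ∈ K) :
    (K.subtypeL (K.orthogonalProjectionOnto x)) = x :=
  congrArg K.subtypeL (Submodule.orthogonalProjection_mem_subspace_eq_self (K := K) ⟨x, hx⟩)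

end Stmt17Aux

open Stmt17Aux

/-- Von Neumann's double commutant theorem: for a unital *-subalgebra `A` of `B(H)`,
the double commutant `A''` coincides with the closure of `A` in the strong operator
topology (an operator `T` lies in this closure iff every basic strong-neighborhood of
`T` meets `A`). -/
theorem stmt_17 {H : Type*} [NormedAddCommGroup H] [InnerProductSpace ℂ H]
    [CompleteSpace H] (A : StarSubalgebra ℂ (H →L[ℂ] H)) :
    Set.centralizer (Set.centralizer (A : Set (H →L[ℂ] H))) =
      {T : H →L[ℂ] H | ∀ ε > (0 : ℝ), ∀ (n : ℕ) (ξ : Fin n → H),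
        ∃ a ∈ A, ∀ i : Fin n, ‖(T - a) (ξ i)‖ < ε} := by
  classical
  ext T
  constructor
  · -- hard direction: A'' ⊆ SOT-closure
    intro hT ε hε n ξ
    -- set up the amplification
    let L : (H →L[ℂ] H) →ₗ[ℂ] PiLp 2 (fun _ : Fin n => H) :=
      { toFun := fun a => WithLp.toLp 2 (fun i => a (ξ i) : ∀ _ : Fin n, H)
        map_add' := by intro a b; ext i; rfl
        map_smul' := by intro c a; ext i; rfl }
    have hL : ∀ a (i : Fin n), (L a) i = a (ξ i) := fun a i => rfl
    set W : Submodule ℂ (PiLp 2 (fun _ : Fin n => H)) := Submodule.map L (Subalgebra.toSubmodule A.toSubalgebra) with hW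
    set K := W.topologicalClosure with hK
    haveI : CompleteSpace (PiLp 2 (fun _ : Fin n => H)) := by
      have e : PiLp 2 (fun _ : Fin n => H) ≃ᵤ (∀ _ : Fin n, H) :=
        { toEquiv := WithLp.equiv 2 _
          uniformContinuous_toFun := PiLp.uniformContinuous_ofLp 2 _
          uniformContinuous_invFun := PiLp.uniformContinuous_toLp 2 _ }
      exact e.completeSpace_iff.2 inferInstance
    haveI : K.HasOrthogonalProjection := by
      haveI : CompleteSpace K := IsClosed.completeSpace_coe (hs := W.isClosed_topologicalClosure)
      infer_instance
    set P : PiLp 2 (fun _ : Fin n => H) → PiLp 2 (fun _ : Fin n => H) := fun y => K.subtypeL (K.orthogonalProjectionOnto y) with hP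
    -- invariance of K under diagonal operators from A
    have hinv : ∀ a ∈ A, ∀ x ∈ K, dg n a x ∈ K := by
      intro a ha x hx
      have hmapsW : ∀ y ∈ W, dg n a y ∈ W := by
        rintro y ⟨b, hb, rfl⟩
        refine ⟨a * b, ?_, ?_⟩
        · exact (Subalgebra.mem_toSubmodule _).2
            (mul_mem ha ((Subalgebra.mem_toSubmodule _).1 hb))
        · ext i; rfl
      -- pass to closures
      have hx' : x ∈ closure (W : Set (PiLp 2 (fun _ : Fin n => H))) := by
        rwa [← Submodule.topologicalClosure_coe]
      have : dg n a x ∈ closure (W : Set (PiLp 2 (fun _ : Fin n => H))) :=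
        map_mem_closure (dg n a).continuous hx' hmapsW
      rwa [← Submodule.topologicalClosure_coe] at this
    -- the projection commutes with diagonal operators from A
    have hPcomm : ∀ a ∈ A, ∀ x, P (dg n a x) = dg n a (P x) := by
      intro a ha x
      refine proj_comm K (dg n a) (dg n (ContinuousLinearMap.adjoint a)) ?_ (hinv a ha) ?_ x
      · exact dg_adjoint_inner a
      · have : ContinuousLinearMap.adjoint a ∈ A := by
          rw [← ContinuousLinearMap.star_eq_adjoint]; exact star_mem ha
        exact hinv _ this
    -- matrix entries of P lie in A'
    set Q : Fin n → Fin n → (H →L[ℂ] H) :=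
      fun i j => prj n i ∘L (K.subtypeL ∘L K.orthogonalProjectionOnto) ∘L inc n j with hQ
    have hQapp : ∀ i j x, Q i j x = (P (inc n j x)) i := fun i j x => rfl
    have hQmem : ∀ i j, Q i j ∈ Set.centralizer (A : Set (H →L[ℂ] H)) := by
      intro i j
      rw [Set.mem_centralizer_iff]
      intro a ha
      ext x
      have h1 : dg n a (inc n j x) = inc n j (a x) := by
        ext i'
        rw [dg_apply, inc_apply, inc_apply]
        by_cases h : i' = j <;> simp [h]
      calc (a * Q i j) x = a ((P (inc n j x)) i) := rfl
        _ = (dg n a (P (inc n j x))) i := rfl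
        _ = (P (dg n a (inc n j x))) i := by rw [hPcomm a ha]
        _ = (P (inc n j (a x))) i := by rw [h1]
        _ = (Q i j * a) x := rfl
    -- T commutes with the matrix entries of P
    have hTQ : ∀ i j x, T (Q i j x) = Q i j (T x) := by
      intro i j x
      have := hT _ (hQmem i j)
      calc T (Q i j x) = (Q i j * T) x := by
            rw [this, ContinuousLinearMap.mul_apply]
        _ = Q i j (T x) := rfl
    -- hence the diagonal of T commutes with P
    have hTP : ∀ x, P (dg n T x) = dg n T (P x) := by
      intro x
      ext i
      have hxd : ∀ y : PiLp 2 (fun _ : Fin n => H), P y = ∑ j, P (inc n j (y j)) := by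
        intro y
        have : (K.subtypeL ∘L K.orthogonalProjectionOnto) y
            = ∑ j, (K.subtypeL ∘L K.orthogonalProjectionOnto) (inc n j (y j)) := by
          rw [← map_sum, sum_inc]
        exact this
      calc (P (dg n T x)) i = (∑ j, P (inc n j ((dg n T x) j))) i := by rw [← hxd]
        _ = ∑ j, (P (inc n j (T (x j)))) i := by rw [piLp_sum_apply]; rfl
        _ = ∑ j, Q i j (T (x j)) := by simp only [hQapp]
        _ = ∑ j, T (Q i j (x j)) := by simp only [hTQ]
        _ = T (∑ j, Q i j (x j)) := (map_sum T _ _).symm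
        _ = T (∑ j, (P (inc n j (x j))) i) := by simp only [hQapp]
        _ = T ((∑ j, P (inc n j (x j))) i) := by rw [piLp_sum_apply]
        _ = T ((P x) i) := by rw [← hxd]
        _ = (dg n T (P x)) i := rfl
    -- conclude: `dg n T` applied to the vector `ξ` lies in `K`
    let Xi : PiLp 2 (fun _ : Fin n => H) := L 1
    have hXiK : Xi ∈ K :=
      W.le_topologicalClosure ⟨1, (Subalgebra.mem_toSubmodule _).2 (one_mem _), rfl⟩
    have hPXi : P Xi = Xi := proj_self K hXiK
    have hTXi : dg n T Xi ∈ K := by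
      have : P (dg n T Xi) = dg n T Xi := by rw [hTP, hPXi]
      rw [← this]
      exact (K.orthogonalProjectionOnto (dg n T Xi)).2
    have hTXi' : dg n T Xi ∈ closure (W : Set (PiLp 2 (fun _ : Fin n => H))) := by
      rwa [← Submodule.topologicalClosure_coe]
    obtain ⟨b, hb, hdist⟩ := Metric.mem_closure_iff.1 hTXi' ε hε
    obtain ⟨a, haA, rfl⟩ := hb
    refine ⟨a, (Subalgebra.mem_toSubmodule _).1 haA, ?_⟩
    intro i
    have h1 : (T - a) (ξ i) = (dg n T Xi - L a) i := by
      simp only [ContinuousLinearMap.sub_apply]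
      rfl
    rw [h1]
    calc ‖(dg n T Xi - L a) i‖ ≤ ‖dg n T Xi - L a‖ := piLp_norm_apply_le _ i
      _ < ε := by rwa [← dist_eq_norm]
  · -- easy direction: SOT-closure ⊆ A''
    intro hT
    rw [Set.mem_centralizer_iff]
    intro S hS
    ext ξ
    rw [ContinuousLinearMap.mul_apply, ContinuousLinearMap.mul_apply]
    have key : ∀ ε > (0:ℝ), ‖S (T ξ) - T (S ξ)‖ ≤ (‖S‖ + 1) * ε := by
      intro ε hε
      obtain ⟨a, ha, hax⟩ := hT ε hε 2 ![ξ, S ξ]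
      have h1 : ‖(T - a) ξ‖ < ε := by simpa using hax 0
      have h2 : ‖(T - a) (S ξ)‖ < ε := by simpa using hax 1
      have hcomm : a (S ξ) = S (a ξ) := by
        have := hS a ha
        calc a (S ξ) = (a * S) ξ := rfl
          _ = (S * a) ξ := by rw [this]
          _ = S (a ξ) := rfl
      have hdecomp : S (T ξ) - T (S ξ) = S (T ξ - a ξ) - ((T - a) (S ξ)) := by
        rw [map_sub]
        simp only [ContinuousLinearMap.sub_apply]
        rw [hcomm]
        abel
      rw [hdecomp]
      have h1' : ‖T ξ - a ξ‖ ≤ ε := by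
        simpa [ContinuousLinearMap.sub_apply] using h1.le
      calc ‖S (T ξ - a ξ) - (T - a) (S ξ)‖ ≤ ‖S (T ξ - a ξ)‖ + ‖(T - a) (S ξ)‖ :=
            norm_sub_le _ _
        _ ≤ ‖S‖ * ‖T ξ - a ξ‖ + ε := add_le_add (S.le_opNorm _) h2.le
        _ ≤ ‖S‖ * ε + ε :=
            add_le_add (mul_le_mul_of_nonneg_left h1' (norm_nonneg S)) le_rfl
        _ = (‖S‖ + 1) * ε := by ring
    have : ‖S (T ξ) - T (S ξ)‖ = 0 := by
      by_contra h
      have hpos : 0 < ‖S (T ξ) - T (S ξ)‖ := lt_of_le_of_ne (norm_nonneg _) (Ne.symm h)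
      have hSpos : (0:ℝ) < ‖S‖ + 1 := by positivity
      have hε : (0:ℝ) < ‖S (T ξ) - T (S ξ)‖ / (2 * (‖S‖ + 1)) := by positivity
      have hkey := key _ hε
      have heq : (‖S‖ + 1) * (‖S (T ξ) - T (S ξ)‖ / (2 * (‖S‖ + 1)))
          = ‖S (T ξ) - T (S ξ)‖ / 2 := by
        field_simp
      rw [heq] at hkey
      linarith
    rw [← sub_eq_zero]
    exact norm_eq_zero.1 this
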